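/- Let K be a field, r ≥ 1, and let S be a set of pairs (p,q) of indices in {1,…,r} with p ≠ q, such that for every (p,q) ∈ S there is no index s with s ≠ p, s ≠ q, (p,s) ∈ S and (s,q) ∈ S. Let A and B be r×r matrices over K all of whose off-diagonal entries vanish except possibly at positions in S. If AB = BA, then for every (p,q) ∈ S one has A_{pq}(B_{qq} − B_{pp}) = B_{pq}(A_{qq} − A_{pp}). In particular, if A_{pq} ≠ 0 and A_{qq} = A_{pp}, then B_{qq} = B_{pp} or B_{pq} = 0. -/
import Mathlib


/-- Commuting matrices whose off-diagonal support `S` contains no "composable" pair satisfy,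
at every position of `S`, the relation `A_{pq}(B_{qq} − B_{pp}) = B_{pq}(A_{qq} − A_{pp})`;
in particular a nonzero `A_{pq}` with `A_{qq} = A_{pp}` forces `B_{qq} = B_{pp}` or
`B_{pq} = 0`. -/
theorem commuting_sparse_matrices_diagonal_relation
    (K : Type*) [Field K] (r : ℕ) (hr : 1 ≤ r)
    (S : Set (Fin r × Fin r))
    (hS : ∀ p q : Fin r, (p, q) ∈ S → p ≠ q)
    (hS' : ∀ p q : Fin r, (p, q) ∈ S →
      ¬∃ s : Fin r, s ≠ p ∧ s ≠ q ∧ (p, s) ∈ S ∧ (s, q) ∈ S)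
    (A B : Matrix (Fin r) (Fin r) K)
    (hA : ∀ p q : Fin r, p ≠ q → (p, q) ∉ S → A p q = 0)
    (hB : ∀ p q : Fin r, p ≠ q → (p, q) ∉ S → B p q = 0)
    (hcomm : A * B = B * A) :
    (∀ p q : Fin r, (p, q) ∈ S →
      A p q * (B q q - B p p) = B p q * (A q q - A p p)) ∧
    (∀ p q : Fin r, (p, q) ∈ S → A p q ≠ 0 → A q q = A p p →
      (B q q = B p p ∨ B p q = 0)) := by
  have key : ∀ p q : Fin r, (p, q) ∈ S →
      A p q * (B q q - B p p) = B p q * (A q q - A p p) := by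
    intro p q hpq
    have hpq' : p ≠ q := hS p q hpq
    have h1 : (A * B) p q = A p p * B p q + A p q * B q q := by
      rw [Matrix.mul_apply]
      rw [show (Finset.univ : Finset (Fin r)) = insert p (insert q (Finset.univ \ {p, q})) by
        ext x; simp [Finset.mem_insert]; tauto]
      rw [Finset.sum_insert (by simp; exact hpq'), Finset.sum_insert (by simp)]
      have : ∑ s ∈ Finset.univ \ {p, q}, A p s * B s q = 0 := by
        apply Finset.sum_eq_zero
        intro s hs
        simp only [Finset.mem_sdiff, Finset.mem_insert, Finset.mem_singleton] at hs
        push_neg at hs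
        obtain ⟨-, hsp, hsq⟩ := hs
        by_cases hAs : (p, s) ∈ S
        · by_cases hBs : (s, q) ∈ S
          · exact absurd ⟨s, hsp, hsq, hAs, hBs⟩ (hS' p q hpq)
          · rw [hB s q hsq hBs, mul_zero]
        · rw [hA p s (Ne.symm hsp) hAs, zero_mul]
      rw [this]; ring
    have h2 : (B * A) p q = B p p * A p q + B p q * A q q := by
      rw [Matrix.mul_apply]
      rw [show (Finset.univ : Finset (Fin r)) = insert p (insert q (Finset.univ \ {p, q})) by
        ext x; simp [Finset.mem_insert]; tauto]
      rw [Finset.sum_insert (by simp; exact hpq'), Finset.sum_insert (by simp)]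
      have : ∑ s ∈ Finset.univ \ {p, q}, B p s * A s q = 0 := by
        apply Finset.sum_eq_zero
        intro s hs
        simp only [Finset.mem_sdiff, Finset.mem_insert, Finset.mem_singleton] at hs
        push_neg at hs
        obtain ⟨-, hsp, hsq⟩ := hs
        by_cases hBs : (p, s) ∈ S
        · by_cases hAs : (s, q) ∈ S
          · exact absurd ⟨s, hsp, hsq, hBs, hAs⟩ (hS' p q hpq)
          · rw [hA s q hsq hAs, mul_zero]
        · rw [hB p s (Ne.symm hsp) hBs, zero_mul]
      rw [this]; ring
    have := congrFun (congrFun hcomm p) q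
    rw [h1, h2] at this
    linear_combination this
  refine ⟨key, fun p q hpq hA0 hAeq => ?_⟩
  have := key p q hpq
  rw [hAeq, sub_self, mul_zero] at this
  rcases mul_eq_zero.mp this with h | h
  · exact (hA0 h).elim
  · exact Or.inl (sub_eq_zero.mp h)
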